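/- Let N ≥ 2 and let Ẑ be a self-adjoint complex L×L matrix. Then the map E ∈ ℝ ↦ U^E_N = Π(𝒯^E(N,0)·(1; −Ẑ)) (taking values in the L×L complex matrices) is differentiable in E, and for every E ∈ ℝ the matrix (1/i)·(U^E_N)^* · (d/dE)U^E_N is Hermitian and positive definite. -/

import Mathlib

open MeasureTheory Matrix
open scoped ComplexOrder

noncomputable section

/-- The space of complex `L × L` matrices. -/
abbrev Mat (L : ℕ) := Matrix (Fin L) (Fin L) ℂ

/-- The `2L × 2L` transfer matrix `[[(z − V)T⁻¹, −T^*], [T⁻¹, 0]]`. -/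
def transferM (L : ℕ) (z : ℂ) (T V : Mat L) : Matrix (Fin L ⊕ Fin L) (Fin L ⊕ Fin L) ℂ :=
  Matrix.fromBlocks ((z • (1 : Mat L) - V) * T⁻¹) (-(Tᴴ)) T⁻¹ 0

/-- The transfer matrix across the sample, `𝒯^z(N,0) = 𝒯_N^z ⋯ 𝒯_1^z`. -/
def transferProd (L N : ℕ) (T V : ℕ → Mat L) (z : ℂ) :
    Matrix (Fin L ⊕ Fin L) (Fin L ⊕ Fin L) ℂ :=
  (((List.range N).map (fun n => transferM L z (T (n + 1)) (V (n + 1)))).reverse).prod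

/-- The block tridiagonal Jacobi matrix `H^N_{Ẑ,Z}` (sites `1,…,N` are indexed by `Fin N`). -/
def jacobi (L N : ℕ) (T V : ℕ → Mat L) (Zh Z : Mat L) :
    Matrix (Fin N × Fin L) (Fin N × Fin L) ℂ :=
  Matrix.of fun p q =>
    if p.1 = q.1 then
      (V (p.1.val + 1) - (if p.1.val = 0 then Zh else 0)
        - (if p.1.val = N - 1 then Z else 0)) p.2 q.2
    else if q.1.val = p.1.val + 1 then T (p.1.val + 2) p.2 q.2
    else if p.1.val = q.1.val + 1 then (T (q.1.val + 2))ᴴ p.2 q.2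
    else 0

/-- The symplectic form `J = [[0, −1], [1, 0]]` in `L × L` blocks. -/
def symJ (L : ℕ) : Matrix (Fin L ⊕ Fin L) (Fin L ⊕ Fin L) ℂ := Matrix.fromBlocks 0 (-1) 1 0

/-- Top `L × L` block of a `2L × L` matrix. -/
def topBlk (L : ℕ) (Φ : Matrix (Fin L ⊕ Fin L) (Fin L) ℂ) : Mat L :=
  Matrix.of fun i j => Φ (Sum.inl i) j

/-- Bottom `L × L` block of a `2L × L` matrix. -/
def botBlk (L : ℕ) (Φ : Matrix (Fin L ⊕ Fin L) (Fin L) ℂ) : Mat L :=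
  Matrix.of fun i j => Φ (Sum.inr i) j

/-- A Lagrangian frame: a `2L × L` matrix of maximal rank `L` with `Φ^* J Φ = 0`. -/
def IsLagFrame (L : ℕ) (Φ : Matrix (Fin L ⊕ Fin L) (Fin L) ℂ) : Prop :=
  Φ.rank = L ∧ Φᴴ * symJ L * Φ = 0

/-- The stereographic map `Π(Φ) = (a − i b)(a + i b)⁻¹` for `Φ = (a; b)`. -/
def PiMap (L : ℕ) (Φ : Matrix (Fin L ⊕ Fin L) (Fin L) ℂ) : Mat L :=
  (topBlk L Φ - Complex.I • botBlk L Φ) * (topBlk L Φ + Complex.I • botBlk L Φ)⁻¹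

/-!
Write `Φ(E) = 𝒯^E(N,0) (1; −Ẑ) = (a; b)`, `c = a + i b`, `d = a − i b`, so that `U = d c⁻¹`.
For real `E` every transfer matrix is `J`-unitary, hence `Φ` stays Lagrangian (`b^* a = a^* b`),
which gives `c^* c = d^* d = Φ^* Φ`; differentiating `U = d c⁻¹` then yields
`(1/i) U^* U' = 2 (c⁻¹)^* (Φ^* J Φ') c⁻¹`. Each `𝒯_n` is affine in `E` with derivative
`diag(T_n⁻¹, 0)`, so `𝒯^* J 𝒯'` grows by a term `X^* X` at every step and starts at `diag(1, 0)`
because `T_1 = 1`; sandwiching with `(1; −Ẑ)` gives `Φ^* J Φ' ≥ 1`. This makes `Φ` injective, so `c`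
is invertible, and the form above is positive definite.
-/

section MatrixDeriv

variable {𝕜 : Type*} [NontriviallyNormedField 𝕜] {m n p : Type*}

/-- Matrices carry no default norm in Mathlib, so differentiability is taken entrywise. -/
def HasMatrixDerivAt (f : 𝕜 → Matrix m n 𝕜) (f' : Matrix m n 𝕜) (x : 𝕜) : Prop :=
  ∀ i j, HasDerivAt (fun w => f w i j) (f' i j) x

namespace HasMatrixDerivAt

variable {f g : 𝕜 → Matrix m n 𝕜} {f' g' : Matrix m n 𝕜} {x : 𝕜}

lemma const (A : Matrix m n 𝕜) : HasMatrixDerivAt (fun _ => A) 0 x :=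
  fun _ _ => hasDerivAt_const _ _

lemma add (hf : HasMatrixDerivAt f f' x) (hg : HasMatrixDerivAt g g' x) :
    HasMatrixDerivAt (fun w => f w + g w) (f' + g') x :=
  fun i j => (hf i j).add (hg i j)

lemma sub (hf : HasMatrixDerivAt f f' x) (hg : HasMatrixDerivAt g g' x) :
    HasMatrixDerivAt (fun w => f w - g w) (f' - g') x :=
  fun i j => (hf i j).sub (hg i j)

lemma const_smul (c : 𝕜) (hf : HasMatrixDerivAt f f' x) :
    HasMatrixDerivAt (fun w => c • f w) (c • f') x :=
  fun i j => (hf i j).const_mul c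

lemma mul [Fintype n] {g : 𝕜 → Matrix n p 𝕜} {g' : Matrix n p 𝕜}
    (hf : HasMatrixDerivAt f f' x) (hg : HasMatrixDerivAt g g' x) :
    HasMatrixDerivAt (fun w => f w * g w) (f' * g x + f x * g') x := by
  intro i j
  simp only [mul_apply, Matrix.add_apply]
  rw [← Finset.sum_add_distrib]
  exact HasDerivAt.fun_sum fun k _ => (hf i k).mul (hg k j)

lemma mul_const [Fintype n] (hf : HasMatrixDerivAt f f' x) (A : Matrix n p 𝕜) :
    HasMatrixDerivAt (fun w => f w * A) (f' * A) x := by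
  simpa using hf.mul (const A)

end HasMatrixDerivAt

lemma differentiableAt_det [Fintype n] [DecidableEq n] {f : 𝕜 → Matrix n n 𝕜} {x : 𝕜}
    (hf : ∀ i j, DifferentiableAt 𝕜 (fun w => f w i j) x) :
    DifferentiableAt 𝕜 (fun w => (f w).det) x := by
  simp only [det_apply']
  exact DifferentiableAt.fun_sum fun σ _ =>
    (DifferentiableAt.fun_finsetProd fun i _ => hf (σ i) i).const_mul _

lemma differentiableAt_inv_apply [Fintype n] [DecidableEq n] {f : 𝕜 → Matrix n n 𝕜} {x : 𝕜}
    (hf : ∀ i j, DifferentiableAt 𝕜 (fun w => f w i j) x) (hx : IsUnit (f x)) (i j : n) :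
    DifferentiableAt 𝕜 (fun w => (f w)⁻¹ i j) x := by
  have hdet : (f x).det ≠ 0 := ((isUnit_iff_isUnit_det _).mp hx).ne_zero
  have hadj : DifferentiableAt 𝕜 (fun w => (f w).adjugate i j) x := by
    simp only [adjugate_apply]
    refine differentiableAt_det fun k l => ?_
    rcases eq_or_ne k j with rfl | hkj
    · simpa only [updateRow_self] using differentiableAt_const _
    · simpa only [updateRow_ne hkj] using hf k l
  simp only [inv_def, Matrix.smul_apply, Ring.inverse_eq_inv, smul_eq_mul]
  exact ((differentiableAt_det hf).inv hdet).mul hadj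

/-- Differentiating `(f w)⁻¹ * f w = 1`, valid near `x` because `det (f x) ≠ 0` is an open
condition, determines the derivative of the inverse once it is known to exist. -/
lemma HasMatrixDerivAt.inv [Fintype n] [DecidableEq n] {f : 𝕜 → Matrix n n 𝕜}
    {f' : Matrix n n 𝕜} {x : 𝕜} (hf : HasMatrixDerivAt f f' x) (hx : IsUnit (f x)) :
    HasMatrixDerivAt (fun w => (f w)⁻¹) (-((f x)⁻¹ * f' * (f x)⁻¹)) x := by
  have hdiff i j : DifferentiableAt 𝕜 (fun w => f w i j) x := (hf i j).differentiableAt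
  set g' : Matrix n n 𝕜 := of fun i j => deriv (fun w => (f w)⁻¹ i j) x
  have hg : HasMatrixDerivAt (fun w => (f w)⁻¹) g' x :=
    fun i j => (differentiableAt_inv_apply hdiff hx i j).hasDerivAt
  have hdet : (f x).det ≠ 0 := ((isUnit_iff_isUnit_det _).mp hx).ne_zero
  have hone : (fun w => (f w)⁻¹ * f w) =ᶠ[nhds x] fun _ => 1 := by
    filter_upwards [(differentiableAt_det hdiff).continuousAt.eventually_ne hdet] with w hw
    exact nonsing_inv_mul _ (isUnit_iff_ne_zero.mpr hw)
  have hzero : g' * f x + (f x)⁻¹ * f' = 0 := by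
    ext i j
    refine (hg.mul hf i j).unique ?_
    exact (const (1 : Matrix n n 𝕜) i j).congr_of_eventuallyEq
      (hone.mono fun w hw => by simp only [hw])
  have hg' : g' = -((f x)⁻¹ * f' * (f x)⁻¹) := by
    rw [← neg_mul, ← eq_neg_iff_add_eq_zero.mpr hzero, Matrix.mul_assoc,
      mul_nonsing_inv _ (isUnit_iff_ne_zero.mpr hdet), Matrix.mul_one]
  exact hg' ▸ hg

end MatrixDeriv

section Blocks

variable {L : ℕ}

lemma fromRows_topBlk_botBlk (X : Matrix (Fin L ⊕ Fin L) (Fin L) ℂ) :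
    fromRows (topBlk L X) (botBlk L X) = X := by
  ext (i | i) j <;> rfl

@[simp]
lemma topBlk_fromRows (A B : Mat L) : topBlk L (fromRows A B) = A := rfl

@[simp]
lemma botBlk_fromRows (A B : Mat L) : botBlk L (fromRows A B) = B := rfl

lemma conjTranspose_mul_fromBlocks_mul (P Q R S : Mat L) (X Y : Matrix (Fin L ⊕ Fin L) (Fin L) ℂ) :
    Xᴴ * fromBlocks P Q R S * Y
      = ((topBlk L X)ᴴ * P + (botBlk L X)ᴴ * R) * topBlk L Y
        + ((topBlk L X)ᴴ * Q + (botBlk L X)ᴴ * S) * botBlk L Y := by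
  conv_lhs => rw [← fromRows_topBlk_botBlk X, ← fromRows_topBlk_botBlk Y]
  rw [conjTranspose_fromRows_eq_fromCols_conjTranspose, fromCols_mul_fromBlocks,
    fromCols_mul_fromRows]

lemma conjTranspose_mul_eq_blocks (X Y : Matrix (Fin L ⊕ Fin L) (Fin L) ℂ) :
    Xᴴ * Y = (topBlk L X)ᴴ * topBlk L Y + (botBlk L X)ᴴ * botBlk L Y := by
  simpa [fromBlocks_one] using conjTranspose_mul_fromBlocks_mul 1 0 0 1 X Y

lemma conjTranspose_mul_symJ_mul (X Y : Matrix (Fin L ⊕ Fin L) (Fin L) ℂ) :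
    Xᴴ * symJ L * Y = (botBlk L X)ᴴ * topBlk L Y - (topBlk L X)ᴴ * botBlk L Y := by
  simp [symJ, conjTranspose_mul_fromBlocks_mul, sub_eq_add_neg]

lemma HasMatrixDerivAt.topBlk {f : ℂ → Matrix (Fin L ⊕ Fin L) (Fin L) ℂ}
    {f' : Matrix (Fin L ⊕ Fin L) (Fin L) ℂ} {z : ℂ} (h : HasMatrixDerivAt f f' z) :
    HasMatrixDerivAt (fun w => topBlk L (f w)) (topBlk L f') z :=
  fun i j => h (Sum.inl i) j

lemma HasMatrixDerivAt.botBlk {f : ℂ → Matrix (Fin L ⊕ Fin L) (Fin L) ℂ}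
    {f' : Matrix (Fin L ⊕ Fin L) (Fin L) ℂ} {z : ℂ} (h : HasMatrixDerivAt f f' z) :
    HasMatrixDerivAt (fun w => botBlk L (f w)) (botBlk L f') z :=
  fun i j => h (Sum.inr i) j

end Blocks

lemma Matrix.injective_mulVec_of_posDef_conjTranspose_mul_mul {R n m k : Type*} [CommRing R]
    [PartialOrder R] [StarRing R] [Fintype n] [Fintype m] [Fintype k] {A : Matrix n m R}
    {M : Matrix n k R} {B : Matrix k m R} (h : (Aᴴ * M * B).PosDef) :
    Function.Injective A.mulVec := by
  intro x y hxy
  by_contra hne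
  have hA : A *ᵥ (x - y) = 0 := by rw [mulVec_sub, hxy, sub_self]
  have hpos := h.dotProduct_mulVec_pos (sub_ne_zero.mpr hne)
  rw [← mulVec_mulVec, ← mulVec_mulVec, dotProduct_mulVec, vecMul_conjTranspose, star_star, hA,
    star_zero, zero_dotProduct] at hpos
  exact lt_irrefl _ hpos

section Stereographic

variable {L : ℕ}

def piNum (L : ℕ) (Φ : Matrix (Fin L ⊕ Fin L) (Fin L) ℂ) : Mat L :=
  topBlk L Φ - Complex.I • botBlk L Φ

def piDen (L : ℕ) (Φ : Matrix (Fin L ⊕ Fin L) (Fin L) ℂ) : Mat L :=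
  topBlk L Φ + Complex.I • botBlk L Φ

lemma piMap_eq (Φ : Matrix (Fin L ⊕ Fin L) (Fin L) ℂ) :
    PiMap L Φ = piNum L Φ * (piDen L Φ)⁻¹ := rfl

lemma conjTranspose_piNum_mul_piNum (Φ Ψ : Matrix (Fin L ⊕ Fin L) (Fin L) ℂ) :
    (piNum L Φ)ᴴ * piNum L Ψ = Φᴴ * Ψ + Complex.I • (Φᴴ * symJ L * Ψ) := by
  rw [conjTranspose_mul_eq_blocks, conjTranspose_mul_symJ_mul, piNum, piNum]
  simp only [conjTranspose_sub, conjTranspose_smul, Complex.star_def, Complex.conj_I,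
    Matrix.sub_mul, Matrix.mul_sub, Matrix.smul_mul, Matrix.mul_smul, neg_smul, neg_mul]
  match_scalars <;> ring_nf
  simp

lemma conjTranspose_piDen_mul_piDen (Φ Ψ : Matrix (Fin L ⊕ Fin L) (Fin L) ℂ) :
    (piDen L Φ)ᴴ * piDen L Ψ = Φᴴ * Ψ - Complex.I • (Φᴴ * symJ L * Ψ) := by
  rw [conjTranspose_mul_eq_blocks, conjTranspose_mul_symJ_mul, piDen, piDen]
  simp only [conjTranspose_add, conjTranspose_smul, Complex.star_def, Complex.conj_I,
    Matrix.add_mul, Matrix.mul_add, Matrix.smul_mul, Matrix.mul_smul, neg_smul, neg_mul]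
  match_scalars <;> ring_nf
  simp

lemma isUnit_piDen {Φ : Matrix (Fin L ⊕ Fin L) (Fin L) ℂ} (hΦ : Φᴴ * symJ L * Φ = 0)
    (hinj : Function.Injective Φ.mulVec) : IsUnit (piDen L Φ) := by
  have hden : (piDen L Φ)ᴴ * 1 * piDen L Φ = Φᴴ * Φ := by
    rw [Matrix.mul_one, conjTranspose_piDen_mul_piDen, hΦ, smul_zero, sub_zero]
  rw [← mulVec_injective_iff_isUnit]
  exact injective_mulVec_of_posDef_conjTranspose_mul_mul
    (hden ▸ PosDef.conjTranspose_mul_self Φ hinj)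

lemma isUnit_piDen_of_posDef {Φ Ψ : Matrix (Fin L ⊕ Fin L) (Fin L) ℂ}
    (hΦ : Φᴴ * symJ L * Φ = 0) (hΨ : (Φᴴ * symJ L * Ψ).PosDef) : IsUnit (piDen L Φ) :=
  isUnit_piDen hΦ (injective_mulVec_of_posDef_conjTranspose_mul_mul hΨ)

def piMapDeriv (L : ℕ) (Φ Φ' : Matrix (Fin L ⊕ Fin L) (Fin L) ℂ) : Mat L :=
  piNum L Φ' * (piDen L Φ)⁻¹ + piNum L Φ * -((piDen L Φ)⁻¹ * piDen L Φ' * (piDen L Φ)⁻¹)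

lemma HasMatrixDerivAt.piMap {Φ : ℂ → Matrix (Fin L ⊕ Fin L) (Fin L) ℂ}
    {Φ' : Matrix (Fin L ⊕ Fin L) (Fin L) ℂ} {z : ℂ} (hΦ : HasMatrixDerivAt Φ Φ' z)
    (hz : IsUnit (piDen L (Φ z))) :
    HasMatrixDerivAt (fun w => PiMap L (Φ w)) (piMapDeriv L (Φ z) Φ') z :=
  (hΦ.topBlk.sub (hΦ.botBlk.const_smul _)).mul ((hΦ.topBlk.add (hΦ.botBlk.const_smul _)).inv hz)

lemma conjTranspose_piMap_mul_piMapDeriv {Φ Φ' : Matrix (Fin L ⊕ Fin L) (Fin L) ℂ}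
    (hΦ : Φᴴ * symJ L * Φ = 0) (hc : IsUnit (piDen L Φ)) :
    (PiMap L Φ)ᴴ * piMapDeriv L Φ Φ'
      = ((piDen L Φ)⁻¹)ᴴ * ((2 * Complex.I) • (Φᴴ * symJ L * Φ')) * (piDen L Φ)⁻¹ := by
  set c := piDen L Φ
  set d := piNum L Φ
  have hdd : dᴴ * d = cᴴ * c := by
    rw [conjTranspose_piNum_mul_piNum, conjTranspose_piDen_mul_piDen, hΦ, smul_zero, add_zero,
      sub_zero]
  have hcross : dᴴ * piNum L Φ' - cᴴ * piDen L Φ' = (2 * Complex.I) • (Φᴴ * symJ L * Φ') := by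
    rw [conjTranspose_piNum_mul_piNum, conjTranspose_piDen_mul_piDen]
    module
  have hcc : c * c⁻¹ = 1 := mul_nonsing_inv _ ((isUnit_iff_isUnit_det _).mp hc)
  rw [← hcross, piMap_eq, piMapDeriv, conjTranspose_mul]
  calc (c⁻¹)ᴴ * dᴴ * (piNum L Φ' * c⁻¹ + d * -(c⁻¹ * piDen L Φ' * c⁻¹))
      = (c⁻¹)ᴴ * (dᴴ * piNum L Φ') * c⁻¹ - (c⁻¹)ᴴ * (dᴴ * d) * c⁻¹ * piDen L Φ' * c⁻¹ := by
        noncomm_ring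
    _ = (c⁻¹)ᴴ * (dᴴ * piNum L Φ') * c⁻¹ - (c⁻¹)ᴴ * cᴴ * (c * c⁻¹) * piDen L Φ' * c⁻¹ := by
        rw [hdd]; noncomm_ring
    _ = (c⁻¹)ᴴ * (dᴴ * piNum L Φ' - cᴴ * piDen L Φ') * c⁻¹ := by
        rw [hcc]; noncomm_ring

lemma posDef_inv_I_smul_conjTranspose_piMap_mul_piMapDeriv
    {Φ Φ' : Matrix (Fin L ⊕ Fin L) (Fin L) ℂ} (hΦ : Φᴴ * symJ L * Φ = 0)
    (hΦ' : (Φᴴ * symJ L * Φ').PosDef) :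
    (Complex.I⁻¹ • ((PiMap L Φ)ᴴ * piMapDeriv L Φ Φ')).PosDef := by
  have hc := isUnit_piDen_of_posDef hΦ hΦ'
  have htwo : Complex.I⁻¹ * (2 * Complex.I) = 2 := by field_simp
  rw [conjTranspose_piMap_mul_piMapDeriv hΦ hc, Matrix.mul_smul, Matrix.smul_mul, smul_smul,
    htwo, ← Matrix.smul_mul, ← Matrix.mul_smul]
  refine (hΦ'.smul (by norm_num : (0 : ℂ) < 2)).conjTranspose_mul_mul_same ?_
  exact mulVec_injective_iff_isUnit.mpr (isUnit_nonsing_inv_iff.mpr hc)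

end Stereographic

section Transfer

variable {L : ℕ}

def transferMDeriv (L : ℕ) (T : Mat L) : Matrix (Fin L ⊕ Fin L) (Fin L ⊕ Fin L) ℂ :=
  fromBlocks T⁻¹ 0 0 0

lemma hasMatrixDerivAt_transferM (T V : Mat L) (z : ℂ) :
    HasMatrixDerivAt (fun w => transferM L w T V) (transferMDeriv L T) z := by
  have haffine w : transferM L w T V = w • transferMDeriv L T + transferM L 0 T V := by
    simp [transferM, transferMDeriv, fromBlocks_smul, fromBlocks_add, sub_eq_add_neg,
      add_mul]
  intro i j
  have hentry : (fun w => transferM L w T V i j)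
      = fun w => w * transferMDeriv L T i j + transferM L 0 T V i j :=
    funext fun w => by rw [haffine w]; rfl
  rw [hentry]
  exact (hasDerivAt_mul_const _).add_const _

lemma transferM_conjTranspose_mul_symJ_mul_self (E : ℝ) {T V : Mat L} (hT : IsUnit T)
    (hV : V.IsHermitian) :
    (transferM L E T V)ᴴ * symJ L * transferM L E T V = symJ L := by
  have h1 : T * T⁻¹ = 1 := mul_nonsing_inv _ ((isUnit_iff_isUnit_det _).mp hT)
  have h2 : T⁻¹ᴴ * Tᴴ = 1 := by rw [← conjTranspose_mul, h1, conjTranspose_one]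
  rw [transferM, symJ, fromBlocks_conjTranspose, fromBlocks_multiply, fromBlocks_multiply]
  simp [h1, h2, hV.eq, Matrix.mul_assoc]

lemma transferM_conjTranspose_mul_symJ_mul_deriv (z : ℂ) (T V : Mat L) :
    (transferM L z T V)ᴴ * symJ L * transferMDeriv L T
      = (transferMDeriv L T)ᴴ * transferMDeriv L T := by
  rw [transferM, transferMDeriv, symJ, fromBlocks_conjTranspose, fromBlocks_conjTranspose,
    fromBlocks_multiply, fromBlocks_multiply, fromBlocks_multiply]
  simp

variable (T V : ℕ → Mat L)

lemma transferProd_zero (z : ℂ) : transferProd L 0 T V z = 1 := rfl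

lemma transferProd_succ (k : ℕ) (z : ℂ) :
    transferProd L (k + 1) T V z
      = transferM L z (T (k + 1)) (V (k + 1)) * transferProd L k T V z := by
  simp [transferProd, List.range_succ]

def transferProdDeriv : ℕ → ℂ → Matrix (Fin L ⊕ Fin L) (Fin L ⊕ Fin L) ℂ
  | 0, _ => 0
  | k + 1, z => transferMDeriv L (T (k + 1)) * transferProd L k T V z
      + transferM L z (T (k + 1)) (V (k + 1)) * transferProdDeriv k z

lemma hasMatrixDerivAt_transferProd (k : ℕ) (z : ℂ) :
    HasMatrixDerivAt (transferProd L k T V) (transferProdDeriv T V k z) z := by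
  induction k with
  | zero => exact HasMatrixDerivAt.const 1
  | succ k ih =>
    have hsucc : transferProd L (k + 1) T V
        = fun w => transferM L w (T (k + 1)) (V (k + 1)) * transferProd L k T V w :=
      funext (transferProd_succ T V k)
    rw [hsucc]
    exact (hasMatrixDerivAt_transferM _ _ z).mul ih

variable {T V}

lemma transferProd_conjTranspose_mul_symJ_mul_self (E : ℝ) (k : ℕ)
    (hT : ∀ n < k, IsUnit (T (n + 1))) (hV : ∀ n < k, (V (n + 1)).IsHermitian) :
    (transferProd L k T V E)ᴴ * symJ L * transferProd L k T V E = symJ L := by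
  induction k with
  | zero => simp [transferProd_zero]
  | succ k ih =>
    have hM := transferM_conjTranspose_mul_symJ_mul_self E (hT k k.lt_succ_self)
      (hV k k.lt_succ_self)
    rw [transferProd_succ, conjTranspose_mul]
    calc _ = (transferProd L k T V E)ᴴ * ((transferM L E (T (k + 1)) (V (k + 1)))ᴴ * symJ L
            * transferM L E (T (k + 1)) (V (k + 1))) * transferProd L k T V E := by noncomm_ring
      _ = symJ L := by
        rw [hM, ih (fun n hn => hT n (hn.trans k.lt_succ_self))
          (fun n hn => hV n (hn.trans k.lt_succ_self))]

lemma transferProd_conjTranspose_mul_symJ_mul_deriv_succ (E : ℝ) (k : ℕ)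
    (hT : IsUnit (T (k + 1))) (hV : (V (k + 1)).IsHermitian) :
    (transferProd L (k + 1) T V E)ᴴ * symJ L * transferProdDeriv T V (k + 1) E
      = (transferProd L k T V E)ᴴ * symJ L * transferProdDeriv T V k E
        + (transferMDeriv L (T (k + 1)) * transferProd L k T V E)ᴴ
          * (transferMDeriv L (T (k + 1)) * transferProd L k T V E) := by
  set A := transferM L E (T (k + 1)) (V (k + 1))
  set A' := transferMDeriv L (T (k + 1))
  set P := transferProd L k T V E
  set D := transferProdDeriv T V k E
  have hA' : Aᴴ * symJ L * A' = A'ᴴ * A' := transferM_conjTranspose_mul_symJ_mul_deriv _ _ _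
  have hA : Aᴴ * symJ L * A = symJ L := transferM_conjTranspose_mul_symJ_mul_self E hT hV
  rw [transferProd_succ]
  show (A * P)ᴴ * symJ L * (A' * P + A * D) = Pᴴ * symJ L * D + (A' * P)ᴴ * (A' * P)
  rw [conjTranspose_mul, conjTranspose_mul]
  calc Pᴴ * Aᴴ * symJ L * (A' * P + A * D)
      = Pᴴ * (Aᴴ * symJ L * A') * P + Pᴴ * (Aᴴ * symJ L * A) * D := by noncomm_ring
    _ = Pᴴ * symJ L * D + Pᴴ * A'ᴴ * (A' * P) := by rw [hA', hA]; noncomm_ring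

/-- With `T 1 = 1`, the first factor already contributes `fromBlocks 1 0 0 0` to the quadratic
form `𝒯^* J 𝒯'`, and every later factor adds a term `X^* X`. -/
lemma posSemidef_transferProd_conjTranspose_mul_symJ_mul_deriv_sub (E : ℝ) (hT1 : T 1 = 1)
    {k : ℕ} (hk : 1 ≤ k) (hT : ∀ n < k, IsUnit (T (n + 1)))
    (hV : ∀ n < k, (V (n + 1)).IsHermitian) :
    ((transferProd L k T V E)ᴴ * symJ L * transferProdDeriv T V k E
      - fromBlocks 1 0 0 0).PosSemidef := by
  induction k, hk using Nat.le_induction with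
  | base =>
    have h1 : (transferProd L 1 T V E)ᴴ * symJ L * transferProdDeriv T V 1 E
        = fromBlocks 1 0 0 0 := by
      simp only [transferProdDeriv, transferProd_succ, transferProd_zero, Matrix.mul_one,
        Matrix.mul_zero, add_zero, transferM_conjTranspose_mul_symJ_mul_deriv]
      simp [transferMDeriv, hT1, fromBlocks_conjTranspose, fromBlocks_multiply]
    rw [h1, sub_self]
    exact PosSemidef.zero
  | succ k hk ih =>
    rw [transferProd_conjTranspose_mul_symJ_mul_deriv_succ E k (hT k k.lt_succ_self)
      (hV k k.lt_succ_self), add_sub_right_comm]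
    exact (ih (fun n hn => hT n (hn.trans k.lt_succ_self))
      (fun n hn => hV n (hn.trans k.lt_succ_self))).add (posSemidef_conjTranspose_mul_self _)

end Transfer

section InitialFrame

variable {L : ℕ}

lemma conjTranspose_fromRows_one_neg_mul_symJ_mul_self {Z : Mat L} (hZ : Z.IsHermitian) :
    (fromRows (1 : Mat L) (-Z))ᴴ * symJ L * fromRows (1 : Mat L) (-Z) = 0 := by
  simp [conjTranspose_mul_symJ_mul, hZ.eq]

lemma posDef_conjTranspose_fromRows_one_mul_mul {Q : Matrix (Fin L ⊕ Fin L) (Fin L ⊕ Fin L) ℂ}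
    (X : Mat L) (hQ : (Q - fromBlocks 1 0 0 0).PosSemidef) :
    ((fromRows (1 : Mat L) X)ᴴ * Q * fromRows (1 : Mat L) X).PosDef := by
  set Φ : Matrix (Fin L ⊕ Fin L) (Fin L) ℂ := fromRows 1 X
  have hB : Φᴴ * (fromBlocks 1 0 0 0 : Matrix (Fin L ⊕ Fin L) (Fin L ⊕ Fin L) ℂ) * Φ = 1 := by
    simp [Φ, conjTranspose_mul_fromBlocks_mul]
  have hsplit : Φᴴ * Q * Φ = Φᴴ * (Q - fromBlocks 1 0 0 0) * Φ + 1 := by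
    rw [Matrix.mul_sub, Matrix.sub_mul, hB, sub_add_cancel]
  rw [hsplit]
  exact PosDef.posSemidef_add (hQ.conjTranspose_mul_mul_same Φ) PosDef.one

end InitialFrame

theorem stmt5_general (L N : ℕ) (hN : 2 ≤ N)
    (T V : ℕ → Mat L) (hT1 : T 1 = 1)
    (hTinv : ∀ n, 2 ≤ n → n ≤ N → IsUnit (T n))
    (hV : ∀ n, 1 ≤ n → n ≤ N → (V n).IsHermitian)
    (Zh : Mat L) (hZh : Zh.IsHermitian) :
    ∃ U' : ℝ → Mat L,
      (∀ (E : ℝ) (i j : Fin L),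
        HasDerivAt
          (fun t : ℝ =>
            PiMap L (transferProd L N T V (t : ℂ) * Matrix.fromRows 1 (-Zh)) i j)
          (U' E i j) E) ∧
      (∀ E : ℝ,
        (Complex.I⁻¹ •
          ((PiMap L (transferProd L N T V (E : ℂ) * Matrix.fromRows 1 (-Zh)))ᴴ
            * U' E)).PosDef) := by
  have hT : ∀ n < N, IsUnit (T (n + 1)) := by
    rintro (_ | n) hn
    · simp [hT1]
    · exact hTinv (n + 2) (by omega) hn
  have hV' : ∀ n < N, (V (n + 1)).IsHermitian := fun n hn => hV (n + 1) (by omega) hn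
  set Φ₀ : Matrix (Fin L ⊕ Fin L) (Fin L) ℂ := fromRows 1 (-Zh)
  have hconj (E : ℝ) (M : Matrix (Fin L ⊕ Fin L) (Fin L ⊕ Fin L) ℂ) :
      (transferProd L N T V E * Φ₀)ᴴ * symJ L * (M * Φ₀)
        = Φ₀ᴴ * ((transferProd L N T V E)ᴴ * symJ L * M) * Φ₀ := by
    simp only [conjTranspose_mul, Matrix.mul_assoc]
  have hLag (E : ℝ) :
      (transferProd L N T V E * Φ₀)ᴴ * symJ L * (transferProd L N T V E * Φ₀) = 0 := by
    rw [hconj, transferProd_conjTranspose_mul_symJ_mul_self E N hT hV',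
      conjTranspose_fromRows_one_neg_mul_symJ_mul_self hZh]
  have hPos (E : ℝ) : ((transferProd L N T V E * Φ₀)ᴴ * symJ L
      * (transferProdDeriv T V N E * Φ₀)).PosDef := by
    rw [hconj]
    exact posDef_conjTranspose_fromRows_one_mul_mul _
      (posSemidef_transferProd_conjTranspose_mul_symJ_mul_deriv_sub E hT1 (by omega) hT hV')
  refine ⟨fun E => piMapDeriv L (transferProd L N T V E * Φ₀) (transferProdDeriv T V N E * Φ₀),
    fun E i j => ?_,
    fun E => posDef_inv_I_smul_conjTranspose_piMap_mul_piMapDeriv (hLag E) (hPos E)⟩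
  exact (((hasMatrixDerivAt_transferProd T V N E).mul_const Φ₀).piMap
    (isUnit_piDen_of_posDef (hLag E) (hPos E)) i j).comp_ofReal

theorem stmt5 (L N : ℕ) (hL : 1 ≤ L) (hN : 2 ≤ N)
    (T V : ℕ → Mat L) (hT1 : T 1 = 1)
    (hTinv : ∀ n, 2 ≤ n → n ≤ N → IsUnit (T n))
    (hV : ∀ n, 1 ≤ n → n ≤ N → (V n).IsHermitian)
    (Zh : Mat L) (hZh : Zh.IsHermitian) :
    ∃ U' : ℝ → Mat L,
      (∀ (E : ℝ) (i j : Fin L),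
        HasDerivAt
          (fun t : ℝ =>
            PiMap L (transferProd L N T V (t : ℂ) * Matrix.fromRows 1 (-Zh)) i j)
          (U' E i j) E) ∧
      (∀ E : ℝ,
        (Complex.I⁻¹ •
          ((PiMap L (transferProd L N T V (E : ℂ) * Matrix.fromRows 1 (-Zh)))ᴴ
            * U' E)).PosDef) :=
  stmt5_general L N hN T V hT1 hTinv hV Zh hZh
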